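/- arXiv:1604.00103 — 4 statements merged into one kernel-verified Lean document; each statement's English description precedes it below -/
import Mathlib

section
/- Suppose the functions P_n satisfy the differential-equation system dP_1/dx = −(λ + ξ(x)) P_1(x) and dP_n/dx = −(λ + ξ(x)) P_n(x) + λ P_{n−1}(x) for n ≥ 2. Then for every x ≥ 0 and every n ≥ 1, P_n(x) = (1 − G(x)) e^{−λx} Σ_{k=1}^n P_k(0) (λx)^{n−k} / (n−k)!. -/
open Finset
open scoped Nat

/-!
Multiplying by the integrating factor `w(x) = e^{λx} / (1 - G(x))`, which satisfies
`w' = (λ + ξ) w`, turns the system into the cascade `Q₁' = 0`, `Qₙ₊₁' = λ Qₙ` for `Qₙ = Pₙ w`.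
Its solution with `Qₙ(0) = Pₙ(0)` is `Qₙ(x) = Σ_{k ≤ n} Pₖ(0) (λx)^{n-k} / (n-k)!`, by induction
on `n` and uniqueness of antiderivatives on `[0, ∞)`.
-/

lemma eq_of_hasDerivAt_eq_of_le {f g f' : ℝ → ℝ} {a : ℝ}
    (hf : ∀ x, a ≤ x → HasDerivAt f (f' x) x) (hg : ∀ x, a ≤ x → HasDerivAt g (f' x) x)
    (ha : f a = g a) {x : ℝ} (hx : a ≤ x) : f x = g x :=
  eq_of_has_deriv_right_eq (fun y hy => (hf y hy.1).hasDerivWithinAt)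
    (fun y hy => (hg y hy.1).hasDerivWithinAt)
    (fun y hy => (hf y hy.1).continuousAt.continuousWithinAt)
    (fun y hy => (hg y hy.1).continuousAt.continuousWithinAt) ha x ⟨hx, le_rfl⟩

lemma hasDerivAt_mul_pow_succ_div_factorial (c x : ℝ) (m : ℕ) :
    HasDerivAt (fun y => (c * y) ^ (m + 1) / (m + 1)!) (c * ((c * x) ^ m / m !)) x := by
  have hlin : HasDerivAt (fun y => c * y) c x := by simpa using (hasDerivAt_id x).const_mul c
  refine ((hlin.pow (m + 1)).div_const ((m + 1)! : ℝ)).congr_deriv ?_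
  rw [Nat.add_sub_cancel, Nat.factorial_succ, Nat.cast_mul]
  field_simp

noncomputable def cascadeSolution (c : ℝ) (a : ℕ → ℝ) (n : ℕ) (x : ℝ) : ℝ :=
  ∑ k ∈ Icc 1 n, a k * (c * x) ^ (n - k) / (n - k)!

lemma cascadeSolution_zero_right (c : ℝ) (a : ℕ → ℝ) {n : ℕ} (hn : 1 ≤ n) :
    cascadeSolution c a n 0 = a n := by
  rw [cascadeSolution, sum_eq_single_of_mem n (mem_Icc.mpr ⟨hn, le_rfl⟩)]
  · simp
  · intro k hk hkn
    have : n - k ≠ 0 := by grind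
    simp [this]

lemma hasDerivAt_cascadeSolution_succ (c : ℝ) (a : ℕ → ℝ) (n : ℕ) (x : ℝ) :
    HasDerivAt (cascadeSolution c a (n + 1)) (c * cascadeSolution c a n x) x := by
  have hsplit : cascadeSolution c a (n + 1) = fun y =>
      ∑ k ∈ Icc 1 n, a k * ((c * y) ^ (n - k + 1) / (n - k + 1)!) + a (n + 1) := by
    ext y
    rw [cascadeSolution, sum_Icc_succ_top (by omega)]
    congr 1
    · refine sum_congr rfl fun k hk => ?_
      rw [show n + 1 - k = n - k + 1 by grind]
      ring
    · simp
  rw [hsplit, cascadeSolution, mul_sum]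
  refine ((HasDerivAt.fun_sum fun k _ =>
    (hasDerivAt_mul_pow_succ_div_factorial c x (n - k)).const_mul (a k)).add_const _).congr_deriv
    (sum_congr rfl fun k _ => by ring)

lemma eq_cascadeSolution_of_hasDerivAt {c : ℝ} {Q : ℕ → ℝ → ℝ}
    (hQ₁ : ∀ x, 0 ≤ x → HasDerivAt (Q 1) 0 x)
    (hQ : ∀ n, 1 ≤ n → ∀ x, 0 ≤ x → HasDerivAt (Q (n + 1)) (c * Q n x) x)
    {n : ℕ} (hn : 1 ≤ n) {x : ℝ} (hx : 0 ≤ x) :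
    Q n x = cascadeSolution c (fun k => Q k 0) n x := by
  induction n, hn using Nat.le_induction generalizing x with
  | base =>
    refine eq_of_hasDerivAt_eq_of_le hQ₁ (fun y _ => ?_)
      (cascadeSolution_zero_right c (fun k => Q k 0) le_rfl).symm hx
    simpa [cascadeSolution] using hasDerivAt_cascadeSolution_succ c (fun k => Q k 0) 0 y
  | succ n hn ih =>
    refine eq_of_hasDerivAt_eq_of_le (hQ n hn) (fun y hy => ?_)
      (cascadeSolution_zero_right c (fun k => Q k 0) (by omega)).symm hx
    simpa only [ih hy] using hasDerivAt_cascadeSolution_succ c (fun k => Q k 0) n y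

lemma hasDerivAt_exp_mul_div_one_sub {G : ℝ → ℝ} {g : ℝ} {x : ℝ} (hG : HasDerivAt G g x)
    (hGx : G x ≠ 1) (c : ℝ) :
    HasDerivAt (fun y => Real.exp (c * y) / (1 - G y))
      ((c + g / (1 - G x)) * (Real.exp (c * x) / (1 - G x))) x := by
  have hsub : 1 - G x ≠ 0 := sub_ne_zero.mpr hGx.symm
  have hexp : HasDerivAt (fun y => Real.exp (c * y)) (Real.exp (c * x) * c) x := by
    simpa using ((hasDerivAt_id x).const_mul c).exp
  refine (hexp.div (hG.const_sub 1) hsub).congr_deriv ?_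
  field_simp
  ring

lemma HasDerivAt.mul_integratingFactor {p w : ℝ → ℝ} {a r x : ℝ}
    (hp : HasDerivAt p (-a * p x + r) x) (hw : HasDerivAt w (a * w x) x) :
    HasDerivAt (fun y => p y * w y) (r * w x) x :=
  (hp.mul hw).congr_deriv (by ring)

theorem solution_of_balance_odes_general
    (lam : ℝ)
    (g : ℝ → ℝ)
    (G : ℝ → ℝ) (hGdef : ∀ x, G x = ∫ u in Set.Ioc (0 : ℝ) x, g u)
    (hG' : ∀ x, HasDerivAt G (g x) x)
    (hGlt : ∀ x, 0 ≤ x → G x < 1)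
    (xi : ℝ → ℝ) (hxi : ∀ x, xi x = g x / (1 - G x))
    (P : ℕ → ℝ → ℝ)
    (hdiff : ∀ n, 1 ≤ n → Differentiable ℝ (P n))
    (hode1 : ∀ x, 0 ≤ x → deriv (P 1) x = -(lam + xi x) * P 1 x)
    (hode : ∀ n, 2 ≤ n → ∀ x, 0 ≤ x →
      deriv (P n) x = -(lam + xi x) * P n x + lam * P (n - 1) x) :
    ∀ x, 0 ≤ x → ∀ n, 1 ≤ n →
      P n x = (1 - G x) * Real.exp (-lam * x) *
        ∑ k ∈ Finset.Icc 1 n, P k 0 * (lam * x) ^ (n - k) / (Nat.factorial (n - k)) := by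
  intro x hx n hn
  set w : ℝ → ℝ := fun y => Real.exp (lam * y) / (1 - G y)
  have hw0 : w 0 = 1 := by simp [w, hGdef]
  have hw : ∀ y, 0 ≤ y → HasDerivAt w ((lam + xi y) * w y) y := fun y hy => by
    simpa only [hxi] using hasDerivAt_exp_mul_div_one_sub (hG' y) (hGlt y hy).ne lam
  have hP : ∀ n, 1 ≤ n → ∀ y, HasDerivAt (P n) (deriv (P n) y) y :=
    fun n hn y => (hdiff n hn y).hasDerivAt
  have hQ₁ : ∀ y, 0 ≤ y → HasDerivAt (fun z => P 1 z * w z) 0 y := fun y hy => by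
    have := ((hP 1 le_rfl y).congr_deriv (by rw [hode1 y hy, add_zero])).mul_integratingFactor
      (r := 0) (hw y hy)
    rwa [zero_mul] at this
  have hQ : ∀ n, 1 ≤ n → ∀ y, 0 ≤ y →
      HasDerivAt (fun z => P (n + 1) z * w z) (lam * (P n y * w y)) y := fun n hn y hy => by
    have := ((hP (n + 1) (by omega) y).congr_deriv
      (hode (n + 1) (by omega) y hy)).mul_integratingFactor (hw y hy)
    simpa only [Nat.add_sub_cancel, mul_assoc] using this
  have hsol := eq_cascadeSolution_of_hasDerivAt (Q := fun n z => P n z * w z) hQ₁ hQ hn hx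
  simp only [hw0, mul_one, cascadeSolution] at hsol
  have hGx : 1 - G x ≠ 0 := sub_ne_zero.mpr (hGlt x hx).ne'
  rw [← hsol, neg_mul, Real.exp_neg]
  simp only [w]
  field_simp

/-- Closed-form solution of the differential-equation system
`dP_1/dx = −(λ + ξ(x)) P_1(x)` and
`dP_n/dx = −(λ + ξ(x)) P_n(x) + λ P_{n−1}(x)` for `n ≥ 2`:
for every `x ≥ 0` and `n ≥ 1`,
`P_n(x) = (1 − G(x)) e^{−λx} Σ_{k=1}^n P_k(0) (λx)^{n−k}/(n−k)!`. -/
theorem solution_of_balance_odes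
    (lam : ℝ) (hlam : 0 < lam)
    (g : ℝ → ℝ) (hgnonneg : ∀ x, 0 ≤ g x)
    (hgprob : ∫ x in Set.Ioi (0 : ℝ), g x = 1)
    (G : ℝ → ℝ) (hGdef : ∀ x, G x = ∫ u in Set.Ioc (0 : ℝ) x, g u)
    (hG' : ∀ x, HasDerivAt G (g x) x)
    (hGlt : ∀ x, 0 ≤ x → G x < 1)
    (xi : ℝ → ℝ) (hxi : ∀ x, xi x = g x / (1 - G x))
    (P : ℕ → ℝ → ℝ)
    (hdiff : ∀ n, 1 ≤ n → Differentiable ℝ (P n))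
    (hode1 : ∀ x, 0 ≤ x → deriv (P 1) x = -(lam + xi x) * P 1 x)
    (hode : ∀ n, 2 ≤ n → ∀ x, 0 ≤ x →
      deriv (P n) x = -(lam + xi x) * P n x + lam * P (n - 1) x) :
    ∀ x, 0 ≤ x → ∀ n, 1 ≤ n →
      P n x = (1 - G x) * Real.exp (-lam * x) *
        ∑ k ∈ Finset.Icc 1 n, P k 0 * (lam * x) ^ (n - k) / (Nat.factorial (n - k)) :=
  solution_of_balance_odes_general lam g G hGdef hG' hGlt xi hxi P hdiff hode1 hode
end

section
/- Suppose the functions P_n satisfy the differential-equation system dP_1/dx = −(λ + ξ(x)) P_1(x) and dP_n/dx = −(λ + ξ(x)) P_n(x) + λ P_{n−1}(x) for n ≥ 2, with Σ_{n=1}^∞ P_n(0) z^n absolutely convergent for z ∈ [0,1). Then for every z ∈ [0,1) and x ≥ 0, the generating function P(z; x) := Σ_{n=1}^∞ P_n(x) z^n satisfies P(z; x) = P(z; 0) (1 − G(x)) exp(−λ(1−z)x). -/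
/-!
With `E(x) = (1 - G(x)) e^{-λx}`, which solves `E' = -(λ + ξ) E`, the system is triangular and
an integrating-factor argument gives, by induction on `n`,
`P_{n+1}(x) = E(x) Σ_{i+j=n} P_{i+1}(0) (λx)^j / j!`.
Summed against `z^{n+1}`, this convolution with the exponential series is a Cauchy product,
so `P(z;x) = P(z;0) E(x) e^{λxz}`.
-/

open Finset MeasureTheory Nat Real

noncomputable def expConvCoeff (c : ℕ → ℝ) (t : ℝ) (n : ℕ) : ℝ :=
  ∑ p ∈ antidiagonal n, c p.1 * (t ^ p.2 / p.2 !)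

@[simp]
theorem expConvCoeff_zero (c : ℕ → ℝ) (t : ℝ) : expConvCoeff c t 0 = c 0 := by
  simp [expConvCoeff]

@[simp]
theorem expConvCoeff_at_zero (c : ℕ → ℝ) (n : ℕ) : expConvCoeff c 0 n = c n := by
  rw [expConvCoeff, Nat.sum_antidiagonal_eq_sum_range_succ_mk, sum_range_succ,
    sum_eq_zero fun k hk => by simp [zero_pow (by grind : n - k ≠ 0)]]
  simp

theorem hasDerivAt_expConvCoeff_succ (c : ℕ → ℝ) (n : ℕ) (t : ℝ) :
    HasDerivAt (fun t => expConvCoeff c t (n + 1)) (expConvCoeff c t n) t := by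
  have hterm (p : ℕ × ℕ) : HasDerivAt (fun t => c p.1 * (t ^ (p.2 + 1) / (p.2 + 1)!))
      (c p.1 * (t ^ p.2 / p.2 !)) t := by
    refine (((hasDerivAt_pow (p.2 + 1) t).div_const _).const_mul (c p.1)).congr_deriv ?_
    rw [Nat.factorial_succ]
    push_cast
    field_simp
  simp only [expConvCoeff, Nat.sum_antidiagonal_succ', pow_zero, factorial_zero, cast_one, div_one]
  exact (HasDerivAt.fun_sum fun p _ => hterm p).const_add _

theorem tsum_expConvCoeff_mul_pow_succ {c : ℕ → ℝ} {z : ℝ}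
    (hc : Summable fun n => ‖c n * z ^ (n + 1)‖) (t : ℝ) :
    ∑' n, expConvCoeff c t n * z ^ (n + 1) = (∑' n, c n * z ^ (n + 1)) * exp (t * z) := by
  have hexp : HasSum (fun n => (t * z) ^ n / n !) (exp (t * z)) := by
    rw [exp_eq_exp_ℝ]; exact NormedSpace.expSeries_div_hasSum_exp _
  rw [← hexp.tsum_eq, tsum_mul_tsum_eq_tsum_sum_antidiagonal_of_summable_norm hc
    (by simpa [norm_div] using summable_pow_div_factorial ‖t * z‖)]
  refine tsum_congr fun n => ?_
  rw [expConvCoeff, sum_mul]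
  refine sum_congr rfl fun p hp => ?_
  rw [← mem_antidiagonal.1 hp]
  ring

theorem eq_mul_of_hasDerivAt_linear {a f E s s' : ℝ → ℝ}
    (hE : ∀ t, 0 ≤ t → HasDerivAt E (a t * E t) t) (hE_ne : ∀ t, 0 ≤ t → E t ≠ 0)
    (hs : ∀ t, 0 ≤ t → HasDerivAt s (s' t) t)
    (hf : ∀ t, 0 ≤ t → HasDerivAt f (a t * f t + E t * s' t) t)
    (h0 : f 0 = E 0 * s 0) {x : ℝ} (hx : 0 ≤ x) : f x = E x * s x := by
  have hderiv : ∀ t, 0 ≤ t → HasDerivAt (fun t => f t / E t - s t) 0 t := fun t ht => by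
    refine (((hf t ht).div (hE t ht) (hE_ne t ht)).fun_sub (hs t ht)).congr_deriv ?_
    field_simp [hE_ne t ht]
    ring
  have hconst := constant_of_has_deriv_right_zero
    (fun t ht => (hderiv t ht.1).continuousAt.continuousWithinAt)
    (fun t ht => (hderiv t ht.1).hasDerivWithinAt) x ⟨hx, le_rfl⟩
  rw [h0, mul_div_cancel_left₀ _ (hE_ne 0 le_rfl), sub_self, sub_eq_zero,
    div_eq_iff (hE_ne x hx)] at hconst
  rw [hconst, mul_comm]

theorem hasDerivAt_one_sub_mul_exp {G : ℝ → ℝ} {g lam x : ℝ} (hG : HasDerivAt G g x)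
    (hGx : G x ≠ 1) :
    HasDerivAt (fun y => (1 - G y) * exp (-lam * y))
      (-(lam + g / (1 - G x)) * ((1 - G x) * exp (-lam * x))) x := by
  refine (hG.const_sub 1).fun_mul (hasDerivAt_const_mul (-lam)).exp |>.congr_deriv ?_
  field_simp [sub_ne_zero.2 hGx.symm]
  ring

theorem eq_mul_expConvCoeff_of_hasDerivAt {a E : ℝ → ℝ} {lam : ℝ} {Q : ℕ → ℝ → ℝ}
    (hE : ∀ x, 0 ≤ x → HasDerivAt E (a x * E x) x) (hE0 : E 0 = 1)
    (hE_ne : ∀ x, 0 ≤ x → E x ≠ 0)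
    (hQ0 : ∀ x, 0 ≤ x → HasDerivAt (Q 0) (a x * Q 0 x) x)
    (hQ : ∀ n x, 0 ≤ x → HasDerivAt (Q (n + 1)) (a x * Q (n + 1) x + lam * Q n x) x)
    (n : ℕ) {x : ℝ} (hx : 0 ≤ x) :
    Q n x = E x * expConvCoeff (fun k => Q k 0) (lam * x) n := by
  induction n generalizing x with
  | zero =>
    simp only [expConvCoeff_zero]
    refine eq_mul_of_hasDerivAt_linear (s' := 0) hE hE_ne
      (fun t _ => hasDerivAt_const t _) (fun t ht => by simpa using hQ0 t ht) (by simp [hE0]) hx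
  | succ n ih =>
    refine eq_mul_of_hasDerivAt_linear
      (s := fun t => expConvCoeff (fun k => Q k 0) (lam * t) (n + 1))
      (s' := fun t => expConvCoeff (fun k => Q k 0) (lam * t) n * lam) hE hE_ne
      (fun t _ => (hasDerivAt_expConvCoeff_succ (fun k => Q k 0) n _).comp t
        (hasDerivAt_const_mul lam))
      (fun t ht => (hQ n t ht).congr_deriv ?_) (by simp [hE0]) hx
    rw [ih ht]
    ring

theorem generating_function_closed_form_general
    (lam : ℝ)
    (g : ℝ → ℝ)
    (G : ℝ → ℝ) (hGdef : ∀ x, G x = ∫ u in Set.Ioc (0 : ℝ) x, g u)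
    (hG' : ∀ x, HasDerivAt G (g x) x)
    (hGlt : ∀ x, 0 ≤ x → G x < 1)
    (xi : ℝ → ℝ) (hxi : ∀ x, xi x = g x / (1 - G x))
    (P : ℕ → ℝ → ℝ)
    (hdiff : ∀ n, 1 ≤ n → Differentiable ℝ (P n))
    (hode1 : ∀ x, 0 ≤ x → deriv (P 1) x = -(lam + xi x) * P 1 x)
    (hode : ∀ n, 2 ≤ n → ∀ x, 0 ≤ x →
      deriv (P n) x = -(lam + xi x) * P n x + lam * P (n - 1) x)
    (hconv : ∀ z ∈ Set.Ico (0 : ℝ) 1,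
      Summable fun n : ℕ => |P (n + 1) 0| * z ^ (n + 1)) :
    ∀ z ∈ Set.Ico (0 : ℝ) 1, ∀ x, 0 ≤ x →
      (∑' n : ℕ, P (n + 1) x * z ^ (n + 1)) =
        (∑' n : ℕ, P (n + 1) 0 * z ^ (n + 1)) *
          ((1 - G x) * Real.exp (-lam * (1 - z) * x)) := by
  intro z hz x hx
  have hG0 : G 0 = 0 := by simp [hGdef]
  have hsol := eq_mul_expConvCoeff_of_hasDerivAt (a := fun x => -(lam + xi x)) (lam := lam)
    (E := fun y => (1 - G y) * exp (-lam * y)) (Q := fun n => P (n + 1))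
    (fun x hx => hxi x ▸ hasDerivAt_one_sub_mul_exp (hG' x) (hGlt x hx).ne)
    (by simp [hG0])
    (fun x hx => mul_ne_zero (sub_ne_zero.2 (hGlt x hx).ne') (exp_ne_zero _))
    (fun x hx => hode1 x hx ▸ (hdiff 1 le_rfl x).hasDerivAt)
    (fun n x hx => hode (n + 2) (by omega) x hx ▸ (hdiff (n + 2) (by omega) x).hasDerivAt)
  have hsummable : Summable fun n => ‖P (n + 1) 0 * z ^ (n + 1)‖ := by
    simpa [abs_of_nonneg hz.1] using hconv z hz
  calc ∑' n, P (n + 1) x * z ^ (n + 1)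
      = (1 - G x) * exp (-lam * x) *
          ∑' n, expConvCoeff (fun k => P (k + 1) 0) (lam * x) n * z ^ (n + 1) := by
        rw [← tsum_mul_left]
        exact tsum_congr fun n => by rw [hsol n hx, mul_assoc]
    _ = _ := by
        rw [tsum_expConvCoeff_mul_pow_succ hsummable, show -lam * (1 - z) * x
          = -lam * x + lam * x * z by ring, exp_add]
        ring

/-- The generating function `P(z;x) = Σ_{n=1}^∞ P_n(x) z^n` of the
solution of the differential-equation system
`dP_1/dx = −(λ + ξ(x)) P_1(x)`,
`dP_n/dx = −(λ + ξ(x)) P_n(x) + λ P_{n−1}(x)` (`n ≥ 2`)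
satisfies `P(z;x) = P(z;0) (1 − G(x)) exp(−λ(1−z)x)` for every `z ∈ [0,1)` and
`x ≥ 0`, provided `Σ_n P_n(0) z^n` converges absolutely for `z ∈ [0,1)`. -/
theorem generating_function_closed_form
    (lam : ℝ) (hlam : 0 < lam)
    (g : ℝ → ℝ) (hgnonneg : ∀ x, 0 ≤ g x)
    (hgprob : ∫ x in Set.Ioi (0 : ℝ), g x = 1)
    (G : ℝ → ℝ) (hGdef : ∀ x, G x = ∫ u in Set.Ioc (0 : ℝ) x, g u)
    (hG' : ∀ x, HasDerivAt G (g x) x)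
    (hGlt : ∀ x, 0 ≤ x → G x < 1)
    (xi : ℝ → ℝ) (hxi : ∀ x, xi x = g x / (1 - G x))
    (P : ℕ → ℝ → ℝ)
    (hPnonneg : ∀ n x, 0 ≤ x → 0 ≤ P n x)
    (hdiff : ∀ n, 1 ≤ n → Differentiable ℝ (P n))
    (hode1 : ∀ x, 0 ≤ x → deriv (P 1) x = -(lam + xi x) * P 1 x)
    (hode : ∀ n, 2 ≤ n → ∀ x, 0 ≤ x →
      deriv (P n) x = -(lam + xi x) * P n x + lam * P (n - 1) x)
    (hconv : ∀ z ∈ Set.Ico (0 : ℝ) 1,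
      Summable fun n : ℕ => |P (n + 1) 0| * z ^ (n + 1)) :
    ∀ z ∈ Set.Ico (0 : ℝ) 1, ∀ x, 0 ≤ x →
      (∑' n : ℕ, P (n + 1) x * z ^ (n + 1)) =
        (∑' n : ℕ, P (n + 1) 0 * z ^ (n + 1)) *
          ((1 - G x) * Real.exp (-lam * (1 - z) * x)) :=
  generating_function_closed_form_general lam g G hGdef hG' hGlt xi hxi P hdiff hode1 hode hconv
end

section
/- Let P_n(x) = (1 − G(x)) e^{−λx} Σ_{k=1}^n P_k(0) (λx)^{n−k}/(n−k)! for n ≥ 1 with Σ P_n(0) z^n absolutely convergent on [0,1), set α_m := ∫_0^∞ P_m(x) ξ(x) dx for m ≥ 1, and suppose the boundary conditions P_n(0) = α_{n+b} for n ≥ 2, P_1(0) = α_{1+b} + λ P_0, and λ P_0 = Σ_{k=1}^b α_k hold, where P_0 ≥ 0. Then for every z ∈ (0,1), ( Σ_{n=1}^∞ P_n(0) z^n ) · ( z^b − G*(λ − λz) ) = Σ_{k=1}^b ( z^{b+1} − z^k ) α_k, where G*(s) := ∫_0^∞ e^{−sx} g(x) dx. -/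
open Finset MeasureTheory

/-!
A service time of density `g` sees `j` arrivals of the rate-`λ` Poisson stream with probability
`k_j = ∫ e^{-λx} (λx)^j / j! g(x) dx`, and `Σ_j k_j z^j = G*(λ - λz)`. In `α_m = ∫ P_m ξ` the hazard
rate cancels the factor `1 - G` of the closed form, leaving `α_m = Σ_{k=1}^m P_k(0) k_{m-k}`; by
the Cauchy product, `Σ_m α_m z^m = P(z) G*(λ - λz)` with `P(z) = Σ_n P_n(0) z^n`. The boundary
conditions give `z^b P(z) = Σ_{m > b} α_m z^m + λ P_0 z^{b+1}`, and subtracting, with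
`λ P_0 = Σ_{k ≤ b} α_k`, yields the identity.
-/

lemma sum_Icc_one_eq_sum_range {M : Type*} [AddCommMonoid M] (f : ℕ → M) (n : ℕ) :
    ∑ k ∈ Icc 1 n, f k = ∑ k ∈ range n, f (k + 1) := by
  rw [range_eq_Ico, sum_Ico_add' f, zero_add, Ico_add_one_right_eq_Icc]

lemma hasSum_convolution_mul_pow {p q : ℕ → ℝ} {z : ℝ}
    (hp : Summable fun n => ‖p (n + 1) * z ^ (n + 1)‖) (hq : Summable fun j => ‖q j * z ^ j‖) :
    HasSum (fun n => (∑ k ∈ Icc 1 (n + 1), p k * q (n + 1 - k)) * z ^ (n + 1))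
      ((∑' n, p (n + 1) * z ^ (n + 1)) * ∑' j, q j * z ^ j) := by
  have hterm : ∀ n, ∑ k ∈ range (n + 1), p (k + 1) * z ^ (k + 1) * (q (n - k) * z ^ (n - k)) =
      (∑ k ∈ Icc 1 (n + 1), p k * q (n + 1 - k)) * z ^ (n + 1) := by
    intro n
    rw [sum_Icc_one_eq_sum_range, sum_mul]
    refine sum_congr rfl fun k hk => ?_
    have hkn : k ≤ n := Nat.lt_succ_iff.mp (mem_range.mp hk)
    have hpow : z ^ (n + 1) = z ^ (k + 1) * z ^ (n - k) := by rw [← pow_add]; congr 1; omega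
    rw [show n + 1 - (k + 1) = n - k by omega, hpow]
    ring
  simpa only [hterm] using hasSum_sum_range_mul_of_summable_norm hp hq

lemma tsum_mul_pow_sub_eq_of_boundary {a p : ℕ → ℝ} {c z T : ℝ} {b : ℕ}
    (hT : HasSum (fun n => a (n + 1) * z ^ (n + 1)) T)
    (hbc1 : ∀ n, 2 ≤ n → p n = a (n + b)) (hbc2 : p 1 = a (1 + b) + c)
    (hbal : c = ∑ k ∈ Icc 1 b, a k) :
    (∑' n, p (n + 1) * z ^ (n + 1)) * z ^ b - T = ∑ k ∈ Icc 1 b, (z ^ (b + 1) - z ^ k) * a k := by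
  have htail : Summable fun n => a (n + b + 1) * z ^ (n + b + 1) :=
    (summable_nat_add_iff b).mpr hT.summable
  have hsplit : T = ∑ k ∈ Icc 1 b, a k * z ^ k + ∑' n, a (n + b + 1) * z ^ (n + b + 1) := by
    rw [← hT.tsum_eq, ← hT.summable.sum_add_tsum_nat_add b, sum_Icc_one_eq_sum_range]
  have hterm : ∀ n, p (n + 1) * z ^ (n + 1) * z ^ b =
      a (n + b + 1) * z ^ (n + b + 1) + if n = 0 then c * z ^ (b + 1) else 0 := by
    rintro (_ | n)
    · simp only [hbc2, if_pos, add_comm 1 b, zero_add]; ring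
    · rw [hbc1 _ (by omega), if_neg n.succ_ne_zero, show n + 1 + 1 + b = n + 1 + b + 1 by omega]
      ring
  have hshift : (∑' n, p (n + 1) * z ^ (n + 1)) * z ^ b =
      ∑' n, a (n + b + 1) * z ^ (n + b + 1) + c * z ^ (b + 1) := by
    rw [← tsum_mul_right, tsum_congr hterm,
      htail.tsum_add (summable_of_ne_finset_zero (s := {0}) fun n hn => if_neg (by simpa using hn)),
      tsum_ite_eq]
  have hrhs : ∑ k ∈ Icc 1 b, (z ^ (b + 1) - z ^ k) * a k =
      c * z ^ (b + 1) - ∑ k ∈ Icc 1 b, a k * z ^ k := by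
    rw [hbal, sum_mul, ← sum_sub_distrib]
    exact sum_congr rfl fun k _ => by ring
  rw [hshift, hsplit, hrhs]
  ring

/-- Its integral over `x` is the probability that exactly `j` arrivals of a rate-`lam` Poisson
stream occur during a service time of density `g`. -/
noncomputable def arrivalDensity (lam : ℝ) (g : ℝ → ℝ) (j : ℕ) (x : ℝ) : ℝ :=
  Real.exp (-lam * x) * (lam * x) ^ j / j.factorial * g x

noncomputable def arrivalProb (lam : ℝ) (g : ℝ → ℝ) (j : ℕ) : ℝ :=
  ∫ x in Set.Ioi 0, arrivalDensity lam g j x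

section Arrivals

variable {lam : ℝ} {g : ℝ → ℝ}

lemma hasSum_arrivalDensity_mul_pow (z x : ℝ) :
    HasSum (fun j => arrivalDensity lam g j x * z ^ j) (Real.exp (-(lam - lam * z) * x) * g x) := by
  have hterm : (fun j => arrivalDensity lam g j x * z ^ j) =
      fun j => (lam * x * z) ^ j / j.factorial * (Real.exp (-lam * x) * g x) := by
    ext j
    simp only [arrivalDensity, mul_pow]
    ring
  have hsum : Real.exp (-(lam - lam * z) * x) * g x =
      Real.exp (lam * x * z) * (Real.exp (-lam * x) * g x) := by
    rw [← mul_assoc, ← Real.exp_add]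
    ring_nf
  rw [hterm, hsum, congrFun Real.exp_eq_exp_ℝ (lam * x * z)]
  exact (NormedSpace.expSeries_div_hasSum_exp (lam * x * z)).mul_right _

variable (hlam : 0 ≤ lam) (hg0 : ∀ x, 0 ≤ g x)
include hlam hg0

lemma arrivalDensity_nonneg (j : ℕ) {x : ℝ} (hx : 0 ≤ x) : 0 ≤ arrivalDensity lam g j x := by
  have hgx := hg0 x
  unfold arrivalDensity
  positivity

lemma arrivalDensity_le (j : ℕ) {x : ℝ} (hx : 0 ≤ x) : arrivalDensity lam g j x ≤ g x := by
  have hpoisson : Real.exp (-lam * x) * ((lam * x) ^ j / j.factorial) ≤ 1 :=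
    calc Real.exp (-lam * x) * ((lam * x) ^ j / j.factorial)
        ≤ Real.exp (-lam * x) * Real.exp (lam * x) := by
          gcongr; exact Real.pow_div_factorial_le_exp _ (by positivity) j
      _ = 1 := by rw [← Real.exp_add]; simp
  rw [arrivalDensity, mul_div_assoc]
  exact mul_le_of_le_one_left (hg0 x) hpoisson

lemma arrivalProb_nonneg (j : ℕ) : 0 ≤ arrivalProb lam g j :=
  setIntegral_nonneg measurableSet_Ioi fun _ hx => arrivalDensity_nonneg hlam hg0 j (le_of_lt hx)

variable (hg : IntegrableOn g (Set.Ioi 0))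
include hg

lemma integrableOn_arrivalDensity (j : ℕ) : IntegrableOn (arrivalDensity lam g j) (Set.Ioi 0) := by
  refine hg.mono' ?_ ?_
  · exact (Continuous.aestronglyMeasurable (by fun_prop)).mul hg.aestronglyMeasurable
  · filter_upwards [ae_restrict_mem measurableSet_Ioi] with x hx
    rw [Real.norm_of_nonneg (arrivalDensity_nonneg hlam hg0 j hx.le)]
    exact arrivalDensity_le hlam hg0 j hx.le

lemma arrivalProb_le_integral (j : ℕ) : arrivalProb lam g j ≤ ∫ x in Set.Ioi 0, g x :=
  setIntegral_mono_on (integrableOn_arrivalDensity hlam hg0 hg j) hg measurableSet_Ioi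
    fun _ hx => arrivalDensity_le hlam hg0 j (le_of_lt hx)

lemma hasSum_arrivalProb_mul_pow {z : ℝ} (hz0 : 0 ≤ z) (hz1 : z < 1) :
    HasSum (fun j => arrivalProb lam g j * z ^ j)
      (∫ x in Set.Ioi 0, Real.exp (-(lam - lam * z) * x) * g x) := by
  have hint : ∀ j, IntegrableOn (fun x => arrivalDensity lam g j x * z ^ j) (Set.Ioi 0) :=
    fun j => (integrableOn_arrivalDensity hlam hg0 hg j).mul_const _
  have hnorm : ∀ j, ∫ x in Set.Ioi 0, ‖arrivalDensity lam g j x * z ^ j‖ =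
      arrivalProb lam g j * z ^ j := by
    intro j
    rw [arrivalProb, ← integral_mul_const]
    refine setIntegral_congr_fun measurableSet_Ioi fun x hx => Real.norm_of_nonneg ?_
    exact mul_nonneg (arrivalDensity_nonneg hlam hg0 j (le_of_lt hx)) (pow_nonneg hz0 j)
  have hsummable : Summable fun j => arrivalProb lam g j * z ^ j :=
    ((summable_geometric_of_lt_one hz0 hz1).mul_left (∫ x in Set.Ioi 0, g x)).of_nonneg_of_le
      (fun j => mul_nonneg (arrivalProb_nonneg hlam hg0 j) (pow_nonneg hz0 j))
      fun j => mul_le_mul_of_nonneg_right (arrivalProb_le_integral hlam hg0 hg j) (pow_nonneg hz0 j)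
  have h := hasSum_integral_of_summable_integral_norm hint (by simpa only [hnorm] using hsummable)
  simp only [integral_mul_const, (hasSum_arrivalDensity_mul_pow _ _).tsum_eq] at h
  exact h

lemma setIntegral_closedForm_mul_hazard {G : ℝ → ℝ} (hG : ∀ x, 0 ≤ x → G x < 1) (c : ℕ → ℝ)
    (n : ℕ) :
    ∫ x in Set.Ioi 0, (1 - G x) * Real.exp (-lam * x) *
        (∑ k ∈ Icc 1 n, c k * (lam * x) ^ (n - k) / (n - k).factorial) * (g x / (1 - G x)) =
      ∑ k ∈ Icc 1 n, c k * arrivalProb lam g (n - k) := by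
  have hpointwise : Set.EqOn
      (fun x => (1 - G x) * Real.exp (-lam * x) *
        (∑ k ∈ Icc 1 n, c k * (lam * x) ^ (n - k) / (n - k).factorial) * (g x / (1 - G x)))
      (fun x => ∑ k ∈ Icc 1 n, c k * arrivalDensity lam g (n - k) x) (Set.Ioi 0) := by
    intro x hx
    have hsurvival : 1 - G x ≠ 0 := (sub_pos.mpr (hG x (le_of_lt hx))).ne'
    simp only [arrivalDensity, mul_sum, sum_mul]
    refine sum_congr rfl fun k _ => ?_
    field_simp
  rw [setIntegral_congr_fun measurableSet_Ioi hpointwise,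
    integral_finsetSum _ fun k _ => (integrableOn_arrivalDensity hlam hg0 hg _).const_mul (c k)]
  simp only [integral_const_mul, arrivalProb]

end Arrivals

theorem boundary_generating_function_equation_general
    (lam : ℝ) (hlam : 0 < lam)
    (b : ℕ)
    (g : ℝ → ℝ) (hgnonneg : ∀ x, 0 ≤ g x)
    (hgprob : ∫ x in Set.Ioi (0 : ℝ), g x = 1)
    (G : ℝ → ℝ)
    (hGlt : ∀ x, 0 ≤ x → G x < 1)
    (xi : ℝ → ℝ) (hxi : ∀ x, xi x = g x / (1 - G x))
    (Gstar : ℝ → ℝ)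
    (hGstar : ∀ s, Gstar s = ∫ x in Set.Ioi (0 : ℝ), Real.exp (-s * x) * g x)
    (P : ℕ → ℝ → ℝ)
    (hPform : ∀ n, 1 ≤ n → ∀ x, 0 ≤ x →
      P n x = (1 - G x) * Real.exp (-lam * x) *
        ∑ k ∈ Finset.Icc 1 n, P k 0 * (lam * x) ^ (n - k) / (Nat.factorial (n - k)))
    (hconv : ∀ z ∈ Set.Ico (0 : ℝ) 1,
      Summable fun n : ℕ => |P (n + 1) 0| * z ^ (n + 1))
    (alpha : ℕ → ℝ)
    (halpha : ∀ m, 1 ≤ m → alpha m = ∫ x in Set.Ioi (0 : ℝ), P m x * xi x)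
    (P0 : ℝ)
    (hbc1 : ∀ n, 2 ≤ n → P n 0 = alpha (n + b))
    (hbc2 : P 1 0 = alpha (1 + b) + lam * P0)
    (hbal : lam * P0 = ∑ k ∈ Finset.Icc 1 b, alpha k) :
    ∀ z ∈ Set.Ioo (0 : ℝ) 1,
      (∑' n : ℕ, P (n + 1) 0 * z ^ (n + 1)) * (z ^ b - Gstar (lam - lam * z)) =
        ∑ k ∈ Finset.Icc 1 b, (z ^ (b + 1) - z ^ k) * alpha k := by
  rintro z ⟨hz0, hz1⟩
  have hg : IntegrableOn g (Set.Ioi 0) := Integrable.of_integral_ne_zero (by simp [hgprob])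
  have halpha_conv : ∀ n, alpha (n + 1) =
      ∑ k ∈ Icc 1 (n + 1), P k 0 * arrivalProb lam g (n + 1 - k) := by
    intro n
    rw [halpha _ le_add_self,
      ← setIntegral_closedForm_mul_hazard hlam.le hgnonneg hg hGlt]
    refine setIntegral_congr_fun measurableSet_Ioi fun x hx => ?_
    rw [hPform _ le_add_self x (le_of_lt hx), hxi]
  have hlaplace : HasSum (fun j => arrivalProb lam g j * z ^ j) (Gstar (lam - lam * z)) := by
    rw [hGstar]
    exact hasSum_arrivalProb_mul_pow hlam.le hgnonneg hg hz0.le hz1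
  have hP : Summable fun n => ‖P (n + 1) 0 * z ^ (n + 1)‖ := by
    simpa only [norm_mul, norm_pow, Real.norm_eq_abs, abs_of_pos hz0] using hconv z ⟨hz0.le, hz1⟩
  have hprod := hasSum_convolution_mul_pow (p := fun n => P n 0) (q := arrivalProb lam g) hP
    hlaplace.summable.norm
  simp only [← halpha_conv, hlaplace.tsum_eq] at hprod
  rw [mul_sub]
  exact tsum_mul_pow_sub_eq_of_boundary (p := fun n => P n 0) hprod hbc1 hbc2 hbal

/-- From the closed form
`P_n(x) = (1 − G(x)) e^{−λx} Σ_{k=1}^n P_k(0) (λx)^{n−k}/(n−k)!`,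
the definitions `α_m = ∫_0^∞ P_m(x) ξ(x) dx`, and the boundary conditions
`P_n(0) = α_{n+b}` (`n ≥ 2`), `P_1(0) = α_{1+b} + λ P_0`,
`λ P_0 = Σ_{k=1}^b α_k`, it follows that for every `z ∈ (0,1)`
`(Σ_{n=1}^∞ P_n(0) z^n)(z^b − G*(λ − λz)) = Σ_{k=1}^b (z^{b+1} − z^k) α_k`,
where `G*(s) = ∫_0^∞ e^{−sx} g(x) dx`. -/
theorem boundary_generating_function_equation
    (lam : ℝ) (hlam : 0 < lam)
    (b : ℕ) (hb : 0 < b)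
    (g : ℝ → ℝ) (hgnonneg : ∀ x, 0 ≤ g x)
    (hgprob : ∫ x in Set.Ioi (0 : ℝ), g x = 1)
    (G : ℝ → ℝ) (hGdef : ∀ x, G x = ∫ u in Set.Ioc (0 : ℝ) x, g u)
    (hGlt : ∀ x, 0 ≤ x → G x < 1)
    (xi : ℝ → ℝ) (hxi : ∀ x, xi x = g x / (1 - G x))
    (Gstar : ℝ → ℝ)
    (hGstar : ∀ s, Gstar s = ∫ x in Set.Ioi (0 : ℝ), Real.exp (-s * x) * g x)
    (P : ℕ → ℝ → ℝ)
    (hP0nonneg : ∀ n, 1 ≤ n → 0 ≤ P n 0)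
    (hPform : ∀ n, 1 ≤ n → ∀ x, 0 ≤ x →
      P n x = (1 - G x) * Real.exp (-lam * x) *
        ∑ k ∈ Finset.Icc 1 n, P k 0 * (lam * x) ^ (n - k) / (Nat.factorial (n - k)))
    (hconv : ∀ z ∈ Set.Ico (0 : ℝ) 1,
      Summable fun n : ℕ => |P (n + 1) 0| * z ^ (n + 1))
    (alpha : ℕ → ℝ)
    (halpha : ∀ m, 1 ≤ m → alpha m = ∫ x in Set.Ioi (0 : ℝ), P m x * xi x)
    (hint : ∀ m, 1 ≤ m → IntegrableOn (fun x => P m x * xi x) (Set.Ioi (0 : ℝ)))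
    (P0 : ℝ) (hP0 : 0 ≤ P0)
    (hbc1 : ∀ n, 2 ≤ n → P n 0 = alpha (n + b))
    (hbc2 : P 1 0 = alpha (1 + b) + lam * P0)
    (hbal : lam * P0 = ∑ k ∈ Finset.Icc 1 b, alpha k) :
    ∀ z ∈ Set.Ioo (0 : ℝ) 1,
      (∑' n : ℕ, P (n + 1) 0 * z ^ (n + 1)) * (z ^ b - Gstar (lam - lam * z)) =
        ∑ k ∈ Finset.Icc 1 b, (z ^ (b + 1) - z ^ k) * alpha k :=
  boundary_generating_function_equation_general lam hlam b g hgnonneg hgprob G hGlt xi hxi Gstar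
    hGstar P hPform hconv alpha halpha P0 hbc1 hbc2 hbal
end

section
/- Let g be a probability density on [0,∞) with mean E[S] = ∫_0^∞ x g(x) dx > 0 and with ∫_0^∞ e^{δλx} g(x) dx < ∞ for some δ > 0, let λ > 0, let b be a positive integer with λ E[S] < b, and define G*(s) = ∫_0^∞ e^{−sx} g(x) dx for complex s with Re(s) > −δλ. Then there exists ε ∈ (0, δ) such that for every complex z with |z| = 1 + ε, |G*(λ − λz)| < |z|^b. -/
/-!
Let `M(t) = ∫ e^{tx} g(x) dx` be the moment generating function of the law with density `g`.
Since that law lives on `[0, ∞)`, on the circle `|z| = 1 + ε` we have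
`|G*(λ - λz)| ≤ M(-Re(λ - λz)) ≤ M(λε)`. Finiteness of `M(δλ)` makes `M` differentiable at `0`,
with `M(0) = 1` and `M'(0) = E[S]`, so `M(λε) = 1 + λ E[S] ε + o(ε)`, and the stability
condition `λ E[S] < b` gives `M(λε) < 1 + bε ≤ (1 + ε)^b` for small `ε > 0`.
-/

open MeasureTheory ProbabilityTheory Filter Set Topology

section WithDensity

variable {α : Type*} [MeasurableSpace α] {μ : Measure α} {g : α → ℝ}

lemma integral_withDensity_ofReal (hg : Measurable g) (hg0 : ∀ x, 0 ≤ g x) (f : α → ℝ) :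
    ∫ x, f x ∂μ.withDensity (fun x => ENNReal.ofReal (g x)) = ∫ x, f x * g x ∂μ := by
  refine (integral_withDensity_eq_integral_smul hg.real_toNNReal f).trans ?_
  simp [NNReal.smul_def, hg0, mul_comm]

lemma integrable_withDensity_ofReal_iff (hg : Measurable g) (hg0 : ∀ x, 0 ≤ g x) {f : α → ℝ} :
    Integrable f (μ.withDensity fun x => ENNReal.ofReal (g x)) ↔
      Integrable (fun x => f x * g x) μ := by
  refine (integrable_withDensity_iff_integrable_smul hg.real_toNNReal).trans ?_
  simp [NNReal.smul_def, hg0, mul_comm]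

end WithDensity

section MGF

variable {Ω : Type*} [MeasurableSpace Ω] {μ : Measure Ω} {X : Ω → ℝ} {t u : ℝ}

lemma Iic_subset_integrableExpSet_of_nonneg (hX : AEMeasurable X μ) (hX0 : ∀ᵐ ω ∂μ, 0 ≤ X ω)
    (hu : u ∈ integrableExpSet X μ) : Iic u ⊆ integrableExpSet X μ := by
  intro t (ht : t ≤ u)
  refine Integrable.mono' hu (aemeasurable_exp_mul t hX) ?_
  filter_upwards [hX0] with ω hω
  rw [Real.norm_of_nonneg (Real.exp_pos _).le]
  gcongr

lemma mgf_le_mgf_of_nonneg (hX : AEMeasurable X μ) (hX0 : ∀ᵐ ω ∂μ, 0 ≤ X ω)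
    (hu : u ∈ integrableExpSet X μ) (htu : t ≤ u) : mgf X μ t ≤ mgf X μ u := by
  refine integral_mono_ae (Iic_subset_integrableExpSet_of_nonneg hX hX0 hu htu) hu ?_
  filter_upwards [hX0] with ω hω
  gcongr

lemma hasDerivAt_mgf_zero_of_nonneg (hX : AEMeasurable X μ) (hX0 : ∀ᵐ ω ∂μ, 0 ≤ X ω)
    (hu : 0 < u) (hu' : u ∈ integrableExpSet X μ) : HasDerivAt (mgf X μ) μ[X] 0 := by
  have h0 : (0 : ℝ) ∈ interior (integrableExpSet X μ) :=
    interior_mono (Iic_subset_integrableExpSet_of_nonneg hX hX0 hu') (by simpa using hu)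
  simpa using hasDerivAt_mgf h0

end MGF

lemma HasDerivAt.eventually_nhdsGT_lt_add_mul {f : ℝ → ℝ} {f' r x : ℝ} (hf : HasDerivAt f f' x)
    (hr : f' < r) : ∀ᶠ y in 𝓝[>] x, f y < f x + r * (y - x) := by
  filter_upwards [hf.hasDerivWithinAt.limsup_slope_le' (lt_irrefl x) hr, self_mem_nhdsWithin]
    with y hslope (hxy : x < y)
  rw [slope_def_field, div_lt_iff₀ (sub_pos.2 hxy)] at hslope
  linarith

lemma norm_integral_cexp_neg_mul_le {μ : Measure ℝ} {g : ℝ → ℝ} (hg0 : ∀ x, 0 ≤ g x) (s : ℂ) :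
    ‖∫ x, Complex.exp (-s * x) * (g x : ℂ) ∂μ‖ ≤ ∫ x, Real.exp (-s.re * x) * g x ∂μ := by
  refine (norm_integral_le_integral_norm _).trans_eq (integral_congr_ae (ae_of_all _ fun x => ?_))
  simp [Complex.norm_exp, abs_of_nonneg (hg0 x)]

theorem rouche_inequality_on_circle_general
    (g : ℝ → ℝ) (hgmeas : Measurable g) (hgnonneg : ∀ x, 0 ≤ g x)
    (hgprob : ∫ x in Set.Ioi (0 : ℝ), g x = 1)
    (ES : ℝ) (hES : ES = ∫ x in Set.Ioi (0 : ℝ), x * g x)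
    (lam : ℝ) (hlam : 0 < lam)
    (delta : ℝ) (hdelta : 0 < delta)
    (hexp : IntegrableOn (fun x => Real.exp (delta * lam * x) * g x)
      (Set.Ioi (0 : ℝ)))
    (b : ℕ) (hstab : lam * ES < b)
    (Gstar : ℂ → ℂ)
    (hGstar : ∀ s : ℂ, Gstar s =
      ∫ x in Set.Ioi (0 : ℝ), Complex.exp (-s * (x : ℂ)) * (g x : ℂ)) :
    ∃ ε ∈ Set.Ioo (0 : ℝ) delta, ∀ z : ℂ, ‖z‖ = 1 + ε →
      ‖Gstar (lam - lam * z)‖ < ‖z‖ ^ b := by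
  set ν := (volume.restrict (Ioi (0 : ℝ))).withDensity fun x => ENNReal.ofReal (g x)
  have hmgf (t : ℝ) : mgf id ν t = ∫ x in Ioi 0, Real.exp (t * x) * g x :=
    integral_withDensity_ofReal hgmeas hgnonneg _
  have hν0 : ∀ᵐ x ∂ν, 0 ≤ x := (withDensity_absolutelyContinuous _ _).ae_le
    (ae_restrict_of_forall_mem measurableSet_Ioi fun x hx => le_of_lt hx)
  have hexp' : delta * lam ∈ integrableExpSet id ν :=
    (integrable_withDensity_ofReal_iff hgmeas hgnonneg).2 hexp
  have hmean : ν[id] = ES := (integral_withDensity_ofReal hgmeas hgnonneg _).trans hES.symm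
  have hlin : HasDerivAt (fun ε : ℝ => lam * ε) lam 0 := by
    simpa using (hasDerivAt_id (0 : ℝ)).const_mul lam
  have hderiv : HasDerivAt (fun ε => mgf id ν (lam * ε)) (ES * lam) 0 := hmean ▸
    (hasDerivAt_mgf_zero_of_nonneg aemeasurable_id hν0 (by positivity) hexp').comp_of_eq 0 hlin
      (mul_zero lam).symm
  obtain ⟨ε, hε_lt, hε_mem⟩ := ((hderiv.eventually_nhdsGT_lt_add_mul
    (show ES * lam < b by linarith)).and (Ioo_mem_nhdsGT hdelta)).exists
  refine ⟨ε, hε_mem, fun z hz => ?_⟩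
  have hre : -(lam - lam * z : ℂ).re ≤ lam * ε := by
    have := Complex.re_le_norm z
    simp only [Complex.sub_re, Complex.ofReal_re, Complex.re_ofReal_mul]
    nlinarith
  calc ‖Gstar (lam - lam * z)‖ ≤ mgf id ν (-(lam - lam * z : ℂ).re) := by
        rw [hGstar, hmgf]; exact norm_integral_cexp_neg_mul_le hgnonneg _
    _ ≤ mgf id ν (lam * ε) := mgf_le_mgf_of_nonneg aemeasurable_id hν0
        (Iic_subset_integrableExpSet_of_nonneg aemeasurable_id hν0 hexp'
          (by nlinarith [hε_mem.2] : lam * ε ≤ delta * lam)) hre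
    _ < 1 + b * ε := by simpa [hmgf, hgprob] using hε_lt
    _ ≤ (1 + ε) ^ b := one_add_mul_le_pow (by linarith [hε_mem.1]) b
    _ = ‖z‖ ^ b := by rw [hz]

/-- Rouché-type inequality. If `g` is a probability density on
`[0,∞)` with mean `E[S] > 0` and finite exponential moment
`∫_0^∞ e^{δλx} g(x) dx < ∞` for some `δ > 0`, `λ > 0`, `b` a positive integer
with `λE[S] < b`, and `G*(s) = ∫_0^∞ e^{−sx} g(x) dx`, then there is
`ε ∈ (0, δ)` such that `|G*(λ − λz)| < |z|^b` for every complex `z` with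
`|z| = 1 + ε`. -/
theorem rouche_inequality_on_circle
    (g : ℝ → ℝ) (hgmeas : Measurable g) (hgnonneg : ∀ x, 0 ≤ g x)
    (hgprob : ∫ x in Set.Ioi (0 : ℝ), g x = 1)
    (ES : ℝ) (hES : ES = ∫ x in Set.Ioi (0 : ℝ), x * g x) (hESpos : 0 < ES)
    (hESint : IntegrableOn (fun x => x * g x) (Set.Ioi (0 : ℝ)))
    (lam : ℝ) (hlam : 0 < lam)
    (delta : ℝ) (hdelta : 0 < delta)
    (hexp : IntegrableOn (fun x => Real.exp (delta * lam * x) * g x)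
      (Set.Ioi (0 : ℝ)))
    (b : ℕ) (hb : 0 < b) (hstab : lam * ES < b)
    (Gstar : ℂ → ℂ)
    (hGstar : ∀ s : ℂ, Gstar s =
      ∫ x in Set.Ioi (0 : ℝ), Complex.exp (-s * (x : ℂ)) * (g x : ℂ)) :
    ∃ ε ∈ Set.Ioo (0 : ℝ) delta, ∀ z : ℂ, ‖z‖ = 1 + ε →
      ‖Gstar (lam - lam * z)‖ < ‖z‖ ^ b :=
  rouche_inequality_on_circle_general g hgmeas hgnonneg hgprob ES hES lam hlam delta hdelta hexp b
    hstab Gstar hGstar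
end
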